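/- Let h : (0, 1] → (0, ∞) be nondecreasing, and define f(x) = exp( −∫ₓ¹ dt/(t h(t)) ) for x ∈ (0, 1]. Then for every r ∈ (0, 1] with (r/2)(1 + h(r/2)) ≤ 1, one has f( (r + r h(r/2))/2 ) / f(r/2) ≤ e. (Hence, with δ(r) = r h(r/2), the ratio f((r+δ(r))/2)/f(r/2) stays bounded, so δ(r) is an upper bound for the non-doubling order of the associated subunit balls.) -/

import Mathlib

open Filter Set intervalIntegral

/-! Writing `a = r/2`, the ratio is `exp (∫ₐ^{a + a h(a)} dt/(t h(t)))`. Since `t h(t)` is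
nondecreasing, the integrand is at most `1/(a h(a))` on that interval, whose length is `a h(a)`,
so the exponent is at most `1`. -/

lemma antitoneOn_one_div_mul_self {h : ℝ → ℝ} {s : Set ℝ} (hs : s ⊆ Ioi 0)
    (hpos : ∀ x ∈ s, 0 < h x) (hmono : MonotoneOn h s) :
    AntitoneOn (fun t => 1 / (t * h t)) s := by
  intro x hx y hy hxy
  have hx0 : 0 < x := hs hx
  have hhx := hpos x hx
  have : x * h x ≤ y * h y :=
    mul_le_mul hxy (hmono hx hy hxy) hhx.le (hs hy).le
  exact one_div_le_one_div_of_le (by positivity) this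

lemma AntitoneOn.intervalIntegral_le_mul {g : ℝ → ℝ} {a b : ℝ} (hab : a ≤ b)
    (hg : AntitoneOn g (Icc a b)) : ∫ t in a..b, g t ≤ (b - a) * g a := by
  have hint : IntervalIntegrable g MeasureTheory.volume a b :=
    (uIcc_of_le hab ▸ hg).intervalIntegrable
  calc ∫ t in a..b, g t ≤ ∫ _ in a..b, g a :=
        integral_mono_on hab hint intervalIntegrable_const fun t ht =>
          hg ⟨le_rfl, hab⟩ ht ht.1
    _ = (b - a) * g a := by rw [integral_const, smul_eq_mul]

lemma integral_one_div_mul_self_le_one {h : ℝ → ℝ} {a : ℝ} (ha : 0 < a) (hha : 0 < h a)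
    (hg : AntitoneOn (fun t => 1 / (t * h t)) (Icc a (a + a * h a))) :
    ∫ t in a..a + a * h a, 1 / (t * h t) ≤ 1 :=
  (hg.intervalIntegral_le_mul (le_add_of_nonneg_right (by positivity))).trans_eq
    (by field_simp [ha.ne', hha.ne']; ring)

/-- For `f(x) = exp(−∫ₓ¹ dt/(t h(t)))` with `h` nondecreasing and positive on `(0,1]`,
and for every `r ∈ (0,1]` with `(r/2)(1 + h(r/2)) ≤ 1`, one has
`f((r + r h(r/2))/2)/f(r/2) ≤ e`; hence with `δ(r) = r h(r/2)` the ratio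
`f((r+δ(r))/2)/f(r/2)` stays bounded. -/
theorem stmt12 (h : ℝ → ℝ)
    (hpos : ∀ x ∈ Set.Ioc (0 : ℝ) 1, 0 < h x)
    (hmono : MonotoneOn h (Set.Ioc (0 : ℝ) 1))
    (f : ℝ → ℝ)
    (hf : ∀ x ∈ Set.Ioc (0 : ℝ) 1, f x = Real.exp (-(∫ t in x..1, 1 / (t * h t)))) :
    ∀ r ∈ Set.Ioc (0 : ℝ) 1, (r / 2) * (1 + h (r / 2)) ≤ 1 →
      f ((r + r * h (r / 2)) / 2) / f (r / 2) ≤ Real.exp 1 := by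
  rintro r ⟨hr0, hr1⟩ hle
  set a := r / 2 with ha_def
  have ha : a ∈ Ioc 0 1 := ⟨by positivity, by linarith⟩
  have hha := hpos a ha
  have hb : (r + r * h a) / 2 = a + a * h a := by ring
  rw [hb]
  have hab : a ≤ a + a * h a := le_add_of_nonneg_right (by positivity)
  have hb1 : a + a * h a ≤ 1 := (mul_one_add a (h a)).symm.trans_le hle
  have hg : AntitoneOn (fun t => 1 / (t * h t)) (Icc a 1) :=
    (antitoneOn_one_div_mul_self (fun _ hx => hx.1) hpos hmono).mono
      (Icc_subset_Ioc ha.1 le_rfl)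
  have hstep := integral_one_div_mul_self_le_one ha.1 hha (hg.mono (Icc_subset_Icc_right hb1))
  have hint {u v : ℝ} (hu : a ≤ u) (huv : u ≤ v) (hv : v ≤ 1) :
      IntervalIntegrable (fun t => 1 / (t * h t)) MeasureTheory.volume u v :=
    (hg.mono (by rw [uIcc_of_le huv]; exact Icc_subset_Icc hu hv)).intervalIntegrable
  have hsplit := integral_add_adjacent_intervals (hint le_rfl hab hb1) (hint hab hb1 le_rfl)
  rw [hf _ ⟨ha.1.trans_le hab, hb1⟩, hf a ha, ← Real.exp_sub, Real.exp_le_exp]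
  linarith
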